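/- arXiv:2504.13105 — 2 statements merged into one kernel-verified Lean document; each statement's English description precedes it below -/
import Mathlib

section
/- For each i = 1,…,n−1, the cut δ(N_i) has capacity less than 5, and for each j = 1,…,k−1, the cut δ(Q_j) has capacity less than 5. -/
open Finset

namespace CoverSmallCuts

/-- `nn k` is the number `n = 2 + k(k-1)/2` of nodes. -/
def nn (k : ℕ) : ℕ := 2 + k * (k - 1) / 2

/-- `mm k` is the number `m = k(k-1)/2 + k` of links. -/
def mm (k : ℕ) : ℕ := k * (k - 1) / 2 + k

/-- The nested set `N_i = {1, …, i}`. -/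
def Nset (i : ℕ) : Finset ℕ := Finset.Icc 1 i

/-- The Q-set `Q_j = {2+(j-1)k/2, …, 1+j·k/2}`. -/
def Qset (k j : ℕ) : Finset ℕ := Finset.Icc (2 + (j - 1) * (k / 2)) (1 + j * (k / 2))

/-- Capacity of the path edge `{i, i+1}` of the capacitated graph `G`. -/
def pathCap (k i : ℕ) : ℕ :=
  if i = 1 ∨ i = nn k - 1 then 2
  else if ∃ j ∈ Finset.Icc 1 (k - 1), i ∈ Qset k j ∧ i + 1 ∈ Qset k j then 3
  else 1

/-- Capacity of the cut `δ(S)` in the capacitated graph `G`: the sum of the capacities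
of the edges of `G` with exactly one endpoint in `S`. -/
def cutCap (k : ℕ) (S : Finset ℕ) : ℕ :=
  (∑ i ∈ Finset.Icc 1 (nn k - 1),
      if (i ∈ S) ↔ ((i + 1) ∈ S) then 0 else pathCap k i)
  + (∑ j ∈ Finset.Icc 1 (k - 1),
      if ((1 + (j - 1) * (k / 2)) ∈ S) ↔ ((2 + j * (k / 2)) ∈ S) then 0 else 1)

/-- A links system: the `s,t`-paths `P_1, …, P_{k-1}` are recorded by the function
`node`, where `node i t` is the `t`-th node of the path `P_i` (for `1 ≤ i ≤ k-1` and
`0 ≤ t ≤ k/2 + 1`); the class `P_k` consists of the single link `{1, n}`. -/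
structure LinksSystem (k : ℕ) where
  node : ℕ → ℕ → ℕ
  /-- each path `P_i` starts at `s = 1` -/
  node_first : ∀ i ∈ Finset.Icc 1 (k - 1), node i 0 = 1
  /-- each path `P_i` ends at `t = n` -/
  node_last : ∀ i ∈ Finset.Icc 1 (k - 1), node i (k / 2 + 1) = nn k
  /-- node indices strictly increase along each path -/
  node_mono : ∀ i ∈ Finset.Icc 1 (k - 1), ∀ t ≤ k / 2, node i t < node i (t + 1)
  /-- every node in `{2, …, n-1}` is an internal node of exactly one of `P_1, …, P_{k-1}` -/
  cover : ∀ v ∈ Finset.Icc 2 (nn k - 1),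
      ∃! i, i ∈ Finset.Icc 1 (k - 1) ∧ ∃ t ∈ Finset.Icc 1 (k / 2), node i t = v
  /-- `P_i` has an internal node in `Q_j` iff
  `(i ≤ j ≤ min(i+k/2-1, k-1))` or `(j < i and j ≤ i-k/2)` -/
  meetsQ : ∀ i ∈ Finset.Icc 1 (k - 1), ∀ j ∈ Finset.Icc 1 (k - 1),
      ((∃ t ∈ Finset.Icc 1 (k / 2), node i t ∈ Qset k j) ↔
        ((i ≤ j ∧ j ≤ min (i + k / 2 - 1) (k - 1)) ∨ (j < i ∧ j ≤ i - k / 2)))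

/-- The class `P_i` of links: the edge set of the path `P_i` for `i < k`,
and `{{1, n}}` for `i = k`. -/
def LinksSystem.P {k : ℕ} (LS : LinksSystem k) (i : ℕ) : Finset (Sym2 ℕ) :=
  if i = k then {s(1, nn k)}
  else (Finset.Icc 0 (k / 2)).image fun t => s(LS.node i t, LS.node i (t + 1))

/-- The set `L` of all links. -/
def LinksSystem.links {k : ℕ} (LS : LinksSystem k) : Finset (Sym2 ℕ) :=
  (Finset.Icc 1 k).biUnion LS.P

open scoped Classical in
/-- `deltaL F S` is `δ_F(S)`: the set of links of `F` with exactly one endpoint in `S`. -/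
noncomputable def deltaL (F : Finset (Sym2 ℕ)) (S : Finset ℕ) : Finset (Sym2 ℕ) :=
  F.filter fun e => ∃ a b, e = s(a, b) ∧ a ∈ S ∧ b ∉ S

/-- The 0-1 indicator vector `χ^F` of a set `F` of links. -/
noncomputable def chi (F : Finset (Sym2 ℕ)) : Sym2 ℕ → ℝ :=
  fun e => if e ∈ F then 1 else 0

/-
Every edge of `G` is either a path edge `{i, i+1}` or an extra edge joining the node `1 + (j-1)k/2`
just before `Q_j` to the node `2 + jk/2` just after it.

A nested cut `δ(N_i)` contains the single path edge `{i, i+1}` (capacity at most `3`) and the extra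
edges whose span `[1 + (j-1)k/2, 1 + jk/2]` contains `i`; these spans are consecutive windows of
length `k/2` overlapping only at their ends, so there are at most two of them, and only one when
`i, i+1` lie inside a common `Q_j`, which is exactly when the path edge has capacity `3`.

A cut `δ(Q_j)` contains the two path edges leaving `Q_j` and at most the extra edges `j-1` and
`j+1`. A path edge leaving a Q-set has capacity `2` only at the ends `s` or `t` of the path, and
there the neighbouring extra edge does not exist; so each side of `Q_j` contributes at most `2`.
-/

lemma cutCap_eq (k : ℕ) (S : Finset ℕ) :
    cutCap k S =
      ∑ i ∈ Icc 1 (nn k - 1) with ¬(i ∈ S ↔ i + 1 ∈ S), pathCap k i +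
        #{j ∈ Icc 1 (k - 1) | ¬(1 + (j - 1) * (k / 2) ∈ S ↔ 2 + j * (k / 2) ∈ S)} := by
  simp only [cutCap, sum_filter, card_filter, ite_not]

lemma pathCap_le_three (k i : ℕ) : pathCap k i ≤ 3 := by
  unfold pathCap; split_ifs <;> omega

lemma pathCap_le_two_of_not_exists_Qset (k i : ℕ)
    (hi : ¬∃ j ∈ Icc 1 (k - 1), i ∈ Qset k j ∧ i + 1 ∈ Qset k j) :
    pathCap k i ≤ 2 := by
  unfold pathCap; split_ifs <;> omega

lemma mem_Qset_iff {k j v : ℕ} :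
    v ∈ Qset k j ↔ 2 + (j - 1) * (k / 2) ≤ v ∧ v ≤ 1 + j * (k / 2) :=
  mem_Icc

lemma notMem_Qset_and_succ (k p j : ℕ) :
    ¬(1 + p * (k / 2) ∈ Qset k j ∧ 2 + p * (k / 2) ∈ Qset k j) := by
  rintro ⟨hp, hp'⟩
  rw [mem_Qset_iff] at hp hp'
  have h₁ : j - 1 < p := Nat.lt_of_mul_lt_mul_right (a := k / 2) (by omega)
  have h₂ : p < j := Nat.lt_of_mul_lt_mul_right (a := k / 2) (by omega)
  omega

lemma pathCap_one_add_mul (k p : ℕ) :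
    pathCap k (1 + p * (k / 2)) =
      if 1 + p * (k / 2) = 1 ∨ 1 + p * (k / 2) = nn k - 1 then 2 else 1 := by
  unfold pathCap
  split_ifs with _ hQ
  · rfl
  · obtain ⟨j, -, hj⟩ := hQ
    exact absurd (by rwa [add_right_comm] at hj) (notMem_Qset_and_succ k p j)
  · rfl

lemma pathCap_one_add_mul_le_two (k p : ℕ) : pathCap k (1 + p * (k / 2)) ≤ 2 := by
  rw [pathCap_one_add_mul]; split_ifs <;> omega

lemma pathCap_one_add_mul_eq_one {k p : ℕ} (hp : 1 ≤ p) (hpk : p + 2 ≤ k) :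
    pathCap k (1 + p * (k / 2)) = 1 := by
  have hh : 0 < k / 2 := by omega
  have h_pos : 0 < p * (k / 2) := Nat.mul_pos hp hh
  have h_lt : p * (k / 2) < (k - 1) * (k / 2) := Nat.mul_lt_mul_of_pos_right (by omega) hh
  have h_nn : (k - 1) * (k / 2) ≤ k * (k - 1) / 2 := by
    rw [mul_comm k]; exact Nat.mul_div_le_mul_div_assoc _ _ _
  rw [pathCap_one_add_mul, if_neg]
  unfold nn
  omega

lemma sub_one_mul_add_self {j : ℕ} (hj : 1 ≤ j) (c : ℕ) : (j - 1) * c + c = j * c := by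
  rw [← Nat.succ_mul, Nat.succ_eq_add_one, Nat.sub_add_cancel hj]

lemma pathCrossing_Nset_subset (k i : ℕ) :
    {v ∈ Icc 1 (nn k - 1) | ¬(v ∈ Nset i ↔ v + 1 ∈ Nset i)} ⊆ {i} := by
  intro v
  simp only [Nset, mem_filter, mem_Icc, mem_singleton]
  omega

-- The extra edge `j` crosses `N_i` iff `(j-1)k/2 ≤ i - 1 ≤ jk/2`.
lemma extraCrossing_Nset_subset (k i : ℕ) :
    {j ∈ Icc 1 (k - 1) | ¬(1 + (j - 1) * (k / 2) ∈ Nset i ↔ 2 + j * (k / 2) ∈ Nset i)} ⊆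
      Icc ((i - 1) / (k / 2)) ((i - 1) / (k / 2) + 1) := by
  intro j
  simp only [Nset, mem_filter, mem_Icc]
  intro ⟨hj, hcross⟩
  have hh : 0 < k / 2 := by omega
  have := sub_one_mul_add_self hj.1 (k / 2)
  constructor
  · exact Nat.div_le_of_le_mul (by rw [mul_comm]; omega)
  · rw [← Nat.add_div_right _ hh, Nat.le_div_iff_mul_le hh]
    omega

lemma extraCrossing_Nset_subset_of_mem_Qset {k i j : ℕ}
    (hi : i ∈ Qset k j ∧ i + 1 ∈ Qset k j) :
    {j' ∈ Icc 1 (k - 1) |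
        ¬(1 + (j' - 1) * (k / 2) ∈ Nset i ↔ 2 + j' * (k / 2) ∈ Nset i)} ⊆ {j} := by
  intro j'
  rw [mem_Qset_iff, mem_Qset_iff] at hi
  simp only [Nset, mem_filter, mem_Icc, mem_singleton]
  intro ⟨hj', hcross⟩
  have := sub_one_mul_add_self hj'.1 (k / 2)
  have h₁ : j - 1 < j' := Nat.lt_of_mul_lt_mul_right (a := k / 2) (by omega)
  have h₂ : j' - 1 < j := Nat.lt_of_mul_lt_mul_right (a := k / 2) (by omega)
  omega

lemma cutCap_Nset_lt_five (k i : ℕ) : cutCap k (Nset i) < 5 := by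
  rw [cutCap_eq]
  have hpath := (sum_le_sum_of_subset (f := pathCap k) (pathCrossing_Nset_subset k i)).trans_eq
    (sum_singleton _ _)
  by_cases hQ : ∃ j ∈ Icc 1 (k - 1), i ∈ Qset k j ∧ i + 1 ∈ Qset k j
  · obtain ⟨j, -, hj⟩ := hQ
    have hextra := (card_le_card (extraCrossing_Nset_subset_of_mem_Qset hj)).trans_eq
      (card_singleton j)
    have := pathCap_le_three k i
    omega
  · have hextra := (card_le_card (extraCrossing_Nset_subset k i)).trans_eq (Nat.card_Icc _ _)
    have := pathCap_le_two_of_not_exists_Qset k i hQ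
    omega

lemma pathCrossing_Qset_subset (k j : ℕ) :
    {v ∈ Icc 1 (nn k - 1) | ¬(v ∈ Qset k j ↔ v + 1 ∈ Qset k j)} ⊆
      {1 + (j - 1) * (k / 2), 1 + j * (k / 2)} := by
  intro v
  simp only [mem_filter, mem_Qset_iff, mem_insert, mem_singleton]
  omega

lemma extraCrossing_Qset_subset {k j : ℕ} (hj : 1 ≤ j) :
    {j' ∈ Icc 1 (k - 1) |
        ¬(1 + (j' - 1) * (k / 2) ∈ Qset k j ↔ 2 + j' * (k / 2) ∈ Qset k j)} ⊆
      {j' ∈ Icc 1 (k - 1) | j' = j - 1} ∪ {j' ∈ Icc 1 (k - 1) | j' = j + 1} := by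
  intro j'
  simp only [mem_filter, mem_union, mem_Qset_iff, mem_Icc]
  intro ⟨hj', hcross⟩
  have := sub_one_mul_add_self hj (k / 2)
  have := sub_one_mul_add_self hj'.1 (k / 2)
  have hh : 0 < k / 2 := by omega
  by_cases hleft : 2 + (j - 1) * (k / 2) ≤ 1 + (j' - 1) * (k / 2) ∧
      1 + (j' - 1) * (k / 2) ≤ 1 + j * (k / 2)
  · have h₁ : j - 1 < j' - 1 := Nat.lt_of_mul_lt_mul_right (a := k / 2) (by omega)
    have h₂ : j' - 1 ≤ j := Nat.le_of_mul_le_mul_right (by omega) hh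
    omega
  · have h₁ : j - 1 ≤ j' := Nat.le_of_mul_le_mul_right (by omega) hh
    have h₂ : j' < j := Nat.lt_of_mul_lt_mul_right (a := k / 2) (by omega)
    omega

lemma card_filter_Icc_eq (a b c : ℕ) :
    #{x ∈ Icc a b | x = c} = if c ∈ Icc a b then 1 else 0 := by
  rw [filter_eq']; split_ifs <;> rfl

lemma cutCap_Qset_lt_five {k j : ℕ} (hj : j ∈ Icc 1 (k - 1)) : cutCap k (Qset k j) < 5 := by
  rw [cutCap_eq]
  obtain ⟨hj₁, hjk⟩ := mem_Icc.1 hj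
  have hh : 0 < k / 2 := by omega
  have hne : 1 + (j - 1) * (k / 2) ≠ 1 + j * (k / 2) := by
    have := sub_one_mul_add_self hj₁ (k / 2); omega
  have hpath := (sum_le_sum_of_subset (f := pathCap k) (pathCrossing_Qset_subset k j)).trans_eq
    (sum_pair hne)
  have hextra := (card_le_card (extraCrossing_Qset_subset (k := k) hj₁)).trans (card_union_le _ _)
  rw [card_filter_Icc_eq, card_filter_Icc_eq] at hextra
  have hleft :
      pathCap k (1 + (j - 1) * (k / 2)) + (if j - 1 ∈ Icc 1 (k - 1) then 1 else 0) ≤ 2 := by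
    split_ifs with h
    · rw [pathCap_one_add_mul_eq_one (mem_Icc.1 h).1 (by omega)]
    · exact pathCap_one_add_mul_le_two k _
  have hright : pathCap k (1 + j * (k / 2)) + (if j + 1 ∈ Icc 1 (k - 1) then 1 else 0) ≤ 2 := by
    split_ifs with h
    · rw [pathCap_one_add_mul_eq_one hj₁ (by rw [mem_Icc] at h; omega)]
    · exact pathCap_one_add_mul_le_two k _
  omega

theorem statement1_general (k : ℕ) :
    (∀ i ∈ Finset.Icc 1 (nn k - 1), cutCap k (Nset i) < 5) ∧
    (∀ j ∈ Finset.Icc 1 (k - 1), cutCap k (Qset k j) < 5) :=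
  ⟨fun i _ => cutCap_Nset_lt_five k i, fun _ hj => cutCap_Qset_lt_five hj⟩

/-- each nested cut `δ(N_i)` (`i = 1, …, n-1`) and each Q-cut `δ(Q_j)`
(`j = 1, …, k-1`) has capacity less than `5`. -/
theorem statement1 (k : ℕ) (hk : 4 ≤ k) (hke : Even k) :
    (∀ i ∈ Finset.Icc 1 (nn k - 1), cutCap k (Nset i) < 5) ∧
    (∀ j ∈ Finset.Icc 1 (k - 1), cutCap k (Qset k j) < 5) :=
  statement1_general k

end CoverSmallCuts
end

section
/- For every links system L, the vector x* ∈ ℝ^L with x*_ℓ = 1/k for every link ℓ satisfies Σ_{ℓ∈δ_L(S)} x*_ℓ ≥ 1 for every nonempty proper subset S ⊆ {1,…,n} whose cut capacity in G is less than 5, with equality whenever S is one of the sets N_1,…,N_{n−1}, Q_1,…,Q_{k−1}. -/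
/-!
Every path `P_i` has increasing node indices, so along it membership in an interval of nodes
changes at most twice: `P_i` crosses `N_v` exactly once, and crosses `Q_j` twice if it has a node
in `Q_j` and never otherwise. As `P_i` meets `Q_j` for exactly `k/2` indices `i`, both `N_v` and
`Q_j` are crossed by exactly `k` links (for `N_v` the `k`-th one is `{1, n}`). A set separating `1`
from `n` is crossed by every `P_i` and by `{1, n}`.

Otherwise, after passing to the complement, `S ⊆ {2, …, n-1}`; let `a = min S`, `b = max S`. The
edges of `G` crossing `S` to the left of `a` weigh at least `2`: the path edge `{a-1, a}` has
capacity `2` or `3`, unless `a` starts some `Q_j` with `j ≥ 2`, and then the extra edge jumping over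
`Q_{j-1}` crosses as well. The same holds to the right of `b`. Hence a cut of capacity at most `4`
has nothing crossing between `a` and `b`, and weight exactly `2` on either side: `S = [a, b]`, `a`
starts a Q-set and `b` ends one, and these Q-sets agree, since otherwise the extra edge jumping
over the Q-set of `a` would cross.
-/

open Finset

namespace CoverSmallCuts

section Crossings

variable (p : ℕ → Prop) [DecidablePred p]

def crossings (L : ℕ) : ℕ := #{t ∈ range L | ¬(p t ↔ p (t + 1))}

variable {p}

lemma crossings_succ (L : ℕ) :
    crossings p (L + 1) = crossings p L + if p L ↔ p (L + 1) then 0 else 1 := by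
  simp only [crossings, card_filter, sum_range_succ, ite_not]

lemma exists_not_iff_succ_of_not_iff {u v : ℕ} (huv : u ≤ v) (h : ¬(p u ↔ p v)) :
    ∃ t, u ≤ t ∧ t < v ∧ ¬(p t ↔ p (t + 1)) := by
  induction v, huv using Nat.le_induction with
  | base => exact absurd Iff.rfl h
  | succ v huv ih =>
    by_cases hv : p v ↔ p (v + 1)
    · obtain ⟨t, hut, htv, ht⟩ := ih (fun h' => h (h'.trans hv))
      exact ⟨t, hut, by omega, ht⟩
    · exact ⟨v, huv, by omega, hv⟩

lemma one_le_crossings {L : ℕ} (h : ¬(p 0 ↔ p L)) : 1 ≤ crossings p L := by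
  obtain ⟨t, -, htL, ht⟩ := exists_not_iff_succ_of_not_iff (Nat.zero_le L) h
  exact card_pos.2 ⟨t, mem_filter.2 ⟨mem_range.2 htL, ht⟩⟩

/-- Along `0, 1, …, L`, a predicate whose truth set is order-convex is entered at most once and
left at most once. -/
lemma crossings_add_ite_add_ite {L : ℕ}
    (hp : ∀ ⦃a b c⦄, a ≤ b → b ≤ c → c ≤ L → p a → p c → p b) :
    crossings p L + (if p 0 then 1 else 0) + (if p L then 1 else 0) =
      2 * if ∃ t ≤ L, p t then 1 else 0 := by
  induction L with
  | zero => by_cases h0 : p 0 <;> simp [crossings, h0]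
  | succ L ih =>
    have ih' := ih fun a b c hab hbc hc => hp hab hbc (by omega)
    rw [crossings_succ]
    by_cases hL : p L <;> by_cases hL1 : p (L + 1)
    · have hex : ∃ t ≤ L, p t := ⟨L, le_rfl, hL⟩
      have hex' : ∃ t ≤ L + 1, p t := ⟨L, by omega, hL⟩
      simp only [hL, hL1, hex, hex', if_true, iff_self] at ih' ⊢
      omega
    · have hex : ∃ t ≤ L, p t := ⟨L, le_rfl, hL⟩
      have hex' : ∃ t ≤ L + 1, p t := ⟨L, by omega, hL⟩
      simp only [hL, hL1, hex, hex', if_true, if_false, true_iff] at ih' ⊢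
      omega
    · have hex : ¬∃ t ≤ L, p t := fun ⟨t, htL, ht⟩ => hL (hp htL (by omega) le_rfl ht hL1)
      have hex' : ∃ t ≤ L + 1, p t := ⟨L + 1, le_rfl, hL1⟩
      simp only [hL, hL1, hex, hex', if_true, if_false, false_iff, not_true] at ih' ⊢
      omega
    · have hex : (∃ t ≤ L + 1, p t) ↔ ∃ t ≤ L, p t := by
        refine ⟨fun ⟨t, htL, ht⟩ => ⟨t, ?_, ht⟩, fun ⟨t, htL, ht⟩ => ⟨t, by omega, ht⟩⟩
        rcases Nat.le_succ_iff.1 htL with h | rfl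
        exacts [h, absurd ht hL1]
      simp only [hL, hL1, hex, if_false, iff_self, if_true] at ih' ⊢
      omega

end Crossings

lemma mem_sdiff_iff_mem_sdiff_iff {U S : Finset ℕ} {u v : ℕ} (hu : u ∈ U) (hv : v ∈ U) :
    (u ∈ U \ S ↔ v ∈ U \ S) ↔ (u ∈ S ↔ v ∈ S) := by
  simp only [mem_sdiff, hu, hv, true_and, not_iff_not]

lemma exists_mk_eq_mem_notMem_iff (S : Finset ℕ) (u v : ℕ) :
    (∃ a b, s(u, v) = s(a, b) ∧ a ∈ S ∧ b ∉ S) ↔ ¬(u ∈ S ↔ v ∈ S) := by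
  constructor
  · rintro ⟨a, b, hab, ha, hb⟩
    rcases Sym2.eq_iff.1 hab with ⟨rfl, rfl⟩ | ⟨rfl, rfl⟩ <;> tauto
  · intro h
    by_cases hu : u ∈ S
    · exact ⟨u, v, rfl, hu, fun hv => h (iff_of_true hu hv)⟩
    · exact ⟨v, u, Sym2.eq_swap, by tauto, hu⟩

lemma subset_Icc_two_of_notMem {n : ℕ} {S : Finset ℕ} (hS : S ⊆ Icc 1 n) (h1 : 1 ∉ S)
    (hn : n ∉ S) : S ⊆ Icc 2 (n - 1) := fun x hx => by
  have := mem_Icc.1 (hS hx)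
  have : x ≠ 1 := fun h => h1 (h ▸ hx)
  have : x ≠ n := fun h => hn (h ▸ hx)
  exact mem_Icc.2 ⟨by omega, by omega⟩

lemma mem_of_monotoneOn {f : ℕ → ℕ} {L : ℕ} {S : Finset ℕ} (hS : (S : Set ℕ).OrdConnected)
    (hf : MonotoneOn f (Set.Iic L)) ⦃a b c : ℕ⦄ (hab : a ≤ b) (hbc : b ≤ c) (hc : c ≤ L)
    (ha : f a ∈ S) (hc' : f c ∈ S) : f b ∈ S :=
  hS.out (mem_coe.2 ha) (mem_coe.2 hc')
    ⟨hf (Set.mem_Iic.2 (by omega)) (Set.mem_Iic.2 (by omega)) hab,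
      hf (Set.mem_Iic.2 (by omega)) (Set.mem_Iic.2 hc) hbc⟩

section Cuts

variable {k : ℕ} {S : Finset ℕ}

lemma nn_eq (hke : Even k) : nn k = 2 + (k - 1) * (k / 2) := by
  obtain ⟨q, rfl⟩ := hke
  have h : (q + q) * (q + q - 1) = (q + q - 1) * q * 2 := by ring
  rw [nn, show (q + q) / 2 = q by omega, h, Nat.mul_div_cancel _ two_pos]

lemma mem_Qset {j v : ℕ} : v ∈ Qset k j ↔ 2 + (j - 1) * (k / 2) ≤ v ∧ v ≤ 1 + j * (k / 2) :=
  mem_Icc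

lemma sub_one_mul_add {j : ℕ} (hj : 1 ≤ j) (q : ℕ) : (j - 1) * q + q = j * q := by
  rw [← Nat.succ_mul, Nat.succ_eq_add_one, Nat.sub_add_cancel hj]

lemma Qset_subset (hke : Even k) {j : ℕ} (hj : j ∈ Icc 1 (k - 1)) :
    Qset k j ⊆ Icc 2 (nn k - 1) := by
  intro v hv
  have := Nat.mul_le_mul_right (k / 2) (mem_Icc.1 hj).2
  rw [mem_Qset] at hv
  rw [mem_Icc, nn_eq hke]
  omega

lemma exists_mem_Qset (hk : 2 ≤ k) (hke : Even k) {v : ℕ} (hv : v ∈ Icc 2 (nn k - 1)) :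
    ∃ j ∈ Icc 1 (k - 1), v ∈ Qset k j := by
  rw [mem_Icc, nn_eq hke] at hv
  have hdiv := Nat.div_add_mod' (v - 2) (k / 2)
  have hmod := Nat.mod_lt (v - 2) (show 0 < k / 2 by omega)
  generalize (v - 2) / (k / 2) = m at hdiv
  generalize (v - 2) % (k / 2) = r at hdiv hmod
  have hm : m < k - 1 := Nat.lt_of_mul_lt_mul_right (a := k / 2) (by omega)
  refine ⟨m + 1, mem_Icc.2 ⟨by omega, by omega⟩, mem_Qset.2 ?_⟩
  rw [Nat.add_sub_cancel, add_one_mul]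
  omega

lemma le_of_mem_Qset_of_le {i j a b : ℕ} (ha : a ∈ Qset k i) (hb : b ∈ Qset k j) (hab : a ≤ b) :
    i ≤ j := by
  by_contra! hji
  have := Nat.mul_le_mul_right (k / 2) (show j ≤ i - 1 by omega)
  rw [mem_Qset] at ha hb
  omega

lemma one_le_pathCap (p : ℕ) : 1 ≤ pathCap k p := by
  unfold pathCap; split_ifs <;> omega

lemma pathCap_one : pathCap k 1 = 2 := by simp [pathCap]

lemma pathCap_nn_sub_one : pathCap k (nn k - 1) = 2 := by simp [pathCap]

lemma pathCap_eq_three (hke : Even k) {j p : ℕ} (hj : j ∈ Icc 1 (k - 1)) (hp : p ∈ Qset k j)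
    (hp1 : p + 1 ∈ Qset k j) : pathCap k p = 3 := by
  have h1 := mem_Icc.1 (Qset_subset hke hj hp)
  have h2 := mem_Icc.1 (Qset_subset hke hj hp1)
  rw [pathCap, if_neg (by omega), if_pos ⟨j, hj, hp, hp1⟩]

def cutCapOn (k : ℕ) (S P J : Finset ℕ) : ℕ :=
  (∑ p ∈ P, if p ∈ S ↔ p + 1 ∈ S then 0 else pathCap k p) +
    ∑ j ∈ J, if 1 + (j - 1) * (k / 2) ∈ S ↔ 2 + j * (k / 2) ∈ S then 0 else 1

lemma cutCap_eq_cutCapOn : cutCap k S = cutCapOn k S (Ico 1 (nn k)) (Ico 1 k) := by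
  have h : ∀ m, Icc 1 (m - 1) = Ico 1 m := fun m => by ext; simp only [mem_Icc, mem_Ico]; omega
  rw [cutCap, cutCapOn, h, h]

lemma cutCapOn_Ico_add_cutCapOn_Ico {l m n l' m' n' : ℕ} (hlm : l ≤ m) (hmn : m ≤ n)
    (hlm' : l' ≤ m') (hmn' : m' ≤ n') :
    cutCapOn k S (Ico l m) (Ico l' m') + cutCapOn k S (Ico m n) (Ico m' n') =
      cutCapOn k S (Ico l n) (Ico l' n') := by
  rw [cutCapOn, cutCapOn, cutCapOn, ← sum_Ico_consecutive _ hlm hmn,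
    ← sum_Ico_consecutive _ hlm' hmn']
  ring

lemma le_cutCapOn {P J D E : Finset ℕ} (hD : D ⊆ P) (hDS : ∀ p ∈ D, ¬(p ∈ S ↔ p + 1 ∈ S))
    (hE : E ⊆ J) (hES : ∀ j ∈ E, ¬(1 + (j - 1) * (k / 2) ∈ S ↔ 2 + j * (k / 2) ∈ S)) :
    ∑ p ∈ D, pathCap k p + #E ≤ cutCapOn k S P J := by
  rw [card_eq_sum_ones, cutCapOn]
  gcongr
  · calc ∑ p ∈ D, pathCap k p = ∑ p ∈ D, if p ∈ S ↔ p + 1 ∈ S then 0 else pathCap k p :=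
          sum_congr rfl fun p hp => (if_neg (hDS p hp)).symm
      _ ≤ _ := sum_le_sum_of_subset hD
  · calc ∑ j ∈ E, 1 = ∑ j ∈ E, if 1 + (j - 1) * (k / 2) ∈ S ↔ 2 + j * (k / 2) ∈ S then 0 else 1 :=
          sum_congr rfl fun j hj => (if_neg (hES j hj)).symm
      _ ≤ _ := sum_le_sum_of_subset hE

lemma iff_of_cutCapOn_eq_zero {P J : Finset ℕ} (h : cutCapOn k S P J = 0) :
    (∀ p ∈ P, p ∈ S ↔ p + 1 ∈ S) ∧ ∀ j ∈ J, 1 + (j - 1) * (k / 2) ∈ S ↔ 2 + j * (k / 2) ∈ S := by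
  refine ⟨fun p hp => ?_, fun j hj => ?_⟩ <;> by_contra hcut
  · have := le_cutCapOn (k := k) (singleton_subset_iff.2 hp) (by simpa using hcut)
      (empty_subset J) (by simp)
    simp only [sum_singleton, card_empty] at this
    linarith [one_le_pathCap (k := k) p]
  · have := le_cutCapOn (k := k) (empty_subset P) (by simp) (singleton_subset_iff.2 hj)
      (by simpa using hcut)
    simp at this
    omega

lemma two_le_cutCapOn_left (hke : Even k) {a j : ℕ} (ha : a ∈ S) (hmin : ∀ x ∈ S, a ≤ x)
    (hj : j ∈ Icc 1 (k - 1)) (haj : a ∈ Qset k j) :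
    2 ≤ cutCapOn k S (Ico 1 a) (Ico 1 j) ∧
      (a ≠ 2 + (j - 1) * (k / 2) → 3 ≤ cutCapOn k S (Ico 1 a) (Ico 1 j)) := by
  have hj' := mem_Icc.1 hj
  have haj' := mem_Qset.1 haj
  have hcross : ¬(a - 1 ∈ S ↔ a - 1 + 1 ∈ S) := by
    rw [Nat.sub_add_cancel (by omega)]
    exact fun h => by have := hmin _ (h.2 ha); omega
  have hpath : pathCap k (a - 1) ≤ cutCapOn k S (Ico 1 a) (Ico 1 j) := by
    simpa using le_cutCapOn (k := k) (singleton_subset_iff.2 (mem_Ico.2 ⟨by omega, by omega⟩))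
      (by simpa using hcross) (empty_subset _) (by simp)
  by_cases hstart : a = 2 + (j - 1) * (k / 2)
  · refine ⟨?_, fun h => absurd hstart h⟩
    rcases (show j = 1 ∨ 2 ≤ j by omega) with rfl | hj2
    · rwa [show a - 1 = 1 by simpa using hstart, pathCap_one] at hpath
    -- the extra edge jumping over `Q_{j-1}` lands on `a`
    have hjump := sub_one_mul_add (show 1 ≤ j - 1 by omega) (k / 2)
    have hextra : ¬(1 + (j - 1 - 1) * (k / 2) ∈ S ↔ 2 + (j - 1) * (k / 2) ∈ S) :=
      fun h => by have := hmin _ (h.2 (hstart ▸ ha)); omega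
    have := le_cutCapOn (k := k) (P := Ico 1 a) (J := Ico 1 j) (D := {a - 1}) (E := {j - 1})
      (singleton_subset_iff.2 (mem_Ico.2 ⟨by omega, by omega⟩))
      (by simpa using hcross) (singleton_subset_iff.2 (mem_Ico.2 ⟨by omega, by omega⟩))
      (by simpa using hextra)
    rw [sum_singleton, card_singleton] at this
    linarith [one_le_pathCap (k := k) (a - 1)]
  · have h3 : pathCap k (a - 1) = 3 :=
      pathCap_eq_three hke hj (mem_Qset.2 (by omega)) (by rwa [Nat.sub_add_cancel (by omega)])
    exact ⟨by omega, fun _ => by omega⟩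

lemma two_le_cutCapOn_right (hke : Even k) {b j : ℕ} (hb : b ∈ S) (hmax : ∀ x ∈ S, x ≤ b)
    (hj : j ∈ Icc 1 (k - 1)) (hbj : b ∈ Qset k j) :
    2 ≤ cutCapOn k S (Ico b (nn k)) (Ico (j + 1) k) ∧
      (b ≠ 1 + j * (k / 2) → 3 ≤ cutCapOn k S (Ico b (nn k)) (Ico (j + 1) k)) := by
  have hj' := mem_Icc.1 hj
  have hbj' := mem_Qset.1 hbj
  have hbn := mem_Icc.1 (Qset_subset hke hj hbj)
  have hcross : ¬(b ∈ S ↔ b + 1 ∈ S) := fun h => by have := hmax _ (h.1 hb); omega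
  have hpath : pathCap k b ≤ cutCapOn k S (Ico b (nn k)) (Ico (j + 1) k) := by
    simpa using le_cutCapOn (k := k) (singleton_subset_iff.2 (mem_Ico.2 ⟨le_rfl, by omega⟩))
      (by simpa using hcross) (empty_subset _) (by simp)
  by_cases hend : b = 1 + j * (k / 2)
  · refine ⟨?_, fun h => absurd hend h⟩
    rcases (show j = k - 1 ∨ j + 1 ≤ k - 1 by omega) with rfl | hjk
    · rwa [show pathCap k b = 2 by rw [show b = nn k - 1 by rw [nn_eq hke]; omega,
        pathCap_nn_sub_one]] at hpath
    -- the extra edge jumping over `Q_{j+1}` starts at `b`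
    have hjump := sub_one_mul_add (show 1 ≤ j + 1 by omega) (k / 2)
    rw [Nat.add_sub_cancel] at hjump
    have hextra : ¬(1 + (j + 1 - 1) * (k / 2) ∈ S ↔ 2 + (j + 1) * (k / 2) ∈ S) := by
      rw [Nat.add_sub_cancel]
      exact fun h => by have := hmax _ (h.1 (hend ▸ hb)); omega
    have := le_cutCapOn (k := k) (P := Ico b (nn k)) (J := Ico (j + 1) k) (D := {b})
      (E := {j + 1})
      (singleton_subset_iff.2 (mem_Ico.2 ⟨le_rfl, by omega⟩))
      (by simpa using hcross) (singleton_subset_iff.2 (mem_Ico.2 ⟨le_rfl, by omega⟩))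
      (by simpa using hextra)
    rw [sum_singleton, card_singleton] at this
    linarith [one_le_pathCap (k := k) b]
  · have h3 : pathCap k b = 3 := pathCap_eq_three hke hj hbj (mem_Qset.2 (by omega))
    exact ⟨by omega, fun _ => by omega⟩

theorem exists_eq_Qset_of_cutCap_le_four (hk : 2 ≤ k) (hke : Even k) (hne : S.Nonempty)
    (hS : S ⊆ Icc 2 (nn k - 1)) (hcap : cutCap k S ≤ 4) : ∃ j ∈ Icc 1 (k - 1), S = Qset k j := by
  obtain ⟨a, ha, hmin⟩ : ∃ a ∈ S, ∀ x ∈ S, a ≤ x :=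
    ⟨S.min' hne, S.min'_mem hne, fun x hx => S.min'_le x hx⟩
  obtain ⟨b, hb, hmax⟩ : ∃ b ∈ S, ∀ x ∈ S, x ≤ b :=
    ⟨S.max' hne, S.max'_mem hne, fun x hx => S.le_max' x hx⟩
  have hab := hmin b hb
  obtain ⟨ja, hja, haQ⟩ := exists_mem_Qset hk hke (hS ha)
  obtain ⟨jb, hjb, hbQ⟩ := exists_mem_Qset hk hke (hS hb)
  have hjab : ja ≤ jb := le_of_mem_Qset_of_le haQ hbQ hab
  have haI := mem_Icc.1 (hS ha)
  have hbI := mem_Icc.1 (hS hb)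
  have hja' := mem_Icc.1 hja
  have hjb' := mem_Icc.1 hjb
  have hsplit : cutCapOn k S (Ico 1 a) (Ico 1 ja) + cutCapOn k S (Ico a b) (Ico ja (jb + 1)) +
      cutCapOn k S (Ico b (nn k)) (Ico (jb + 1) k) = cutCap k S := by
    rw [cutCap_eq_cutCapOn, cutCapOn_Ico_add_cutCapOn_Ico, cutCapOn_Ico_add_cutCapOn_Ico] <;> omega
  obtain ⟨hleft, hleft'⟩ := two_le_cutCapOn_left hke ha hmin hja haQ
  obtain ⟨hright, hright'⟩ := two_le_cutCapOn_right hke hb hmax hjb hbQ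
  obtain ⟨hpath, hextra⟩ := iff_of_cutCapOn_eq_zero (k := k) (S := S) (P := Ico a b)
    (J := Ico ja (jb + 1)) (by omega)
  have ha' : a = 2 + (ja - 1) * (k / 2) := by by_contra h; have := hleft' h; omega
  have hb' : b = 1 + jb * (k / 2) := by by_contra h; have := hright' h; omega
  have hint : S = Icc a b := by
    refine subset_antisymm (fun x hx => mem_Icc.2 ⟨hmin x hx, hmax x hx⟩) fun c hc => ?_
    by_contra hcS
    obtain ⟨t, hat, htc, ht⟩ :=
      exists_not_iff_succ_of_not_iff (p := (· ∈ S)) (mem_Icc.1 hc).1 fun h => hcS (h.1 ha)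
    exact ht (hpath t (mem_Ico.2 ⟨hat, by have := (mem_Icc.1 hc).2; omega⟩))
  refine ⟨ja, hja, ?_⟩
  suffices ja = jb by rw [hint, ha', hb', this]; rfl
  by_contra hjj
  -- otherwise the extra edge jumping over `Q_ja` would leave `S`
  have h₁ := sub_one_mul_add (show 1 ≤ ja by omega) (k / 2)
  have h₂ := Nat.mul_le_mul_right (k / 2) (show ja + 1 ≤ jb by omega)
  rw [add_one_mul] at h₂
  have := hextra ja (mem_Ico.2 ⟨le_rfl, by omega⟩)
  rw [hint, mem_Icc, mem_Icc] at this
  omega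

lemma cutCap_sdiff (hke : Even k) :
    cutCap k (Icc 1 (nn k) \ S) = cutCap k S := by
  have hnn := nn_eq hke
  unfold cutCap
  congr 1
  · refine sum_congr rfl fun i hi => ?_
    have hi' := mem_Icc.1 hi
    simp only [mem_sdiff_iff_mem_sdiff_iff (U := Icc 1 (nn k)) (S := S) (u := i) (v := i + 1)
      (mem_Icc.2 ⟨by omega, by omega⟩) (mem_Icc.2 ⟨by omega, by omega⟩)]
  · refine sum_congr rfl fun j hj => ?_
    have hj' := mem_Icc.1 hj
    have := Nat.mul_le_mul_right (k / 2) hj'.2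
    have := Nat.mul_le_mul_right (k / 2) (Nat.sub_le j 1)
    simp only [mem_sdiff_iff_mem_sdiff_iff (U := Icc 1 (nn k)) (S := S)
      (u := 1 + (j - 1) * (k / 2)) (v := 2 + j * (k / 2)) (mem_Icc.2 ⟨by omega, by omega⟩)
      (mem_Icc.2 ⟨by omega, by omega⟩)]

end Cuts

lemma card_filter_meetsQ {k j : ℕ} (hke : Even k) (hj : j ∈ Icc 1 (k - 1)) :
    #{i ∈ Icc 1 (k - 1) | (i ≤ j ∧ j ≤ min (i + k / 2 - 1) (k - 1)) ∨ (j < i ∧ j ≤ i - k / 2)} =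
      k / 2 := by
  have hk := Nat.two_mul_div_two_of_even hke
  have hj' := mem_Icc.1 hj
  have h : {i ∈ Icc 1 (k - 1) | (i ≤ j ∧ j ≤ min (i + k / 2 - 1) (k - 1)) ∨
      (j < i ∧ j ≤ i - k / 2)} = Icc (max 1 (j + 1 - k / 2)) j ∪ Icc (j + k / 2) (k - 1) := by
    ext i
    simp only [mem_filter, mem_Icc, mem_union]
    omega
  rw [h, card_union_of_disjoint (disjoint_left.2 fun i h₁ h₂ => by
    rw [mem_Icc] at h₁ h₂; omega), Nat.card_Icc, Nat.card_Icc]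
  omega

namespace LinksSystem

variable {k : ℕ} (LS : LinksSystem k) {i : ℕ}

lemma node_strictMonoOn (hi : i ∈ Icc 1 (k - 1)) :
    StrictMonoOn (LS.node i) (Set.Iic (k / 2 + 1)) :=
  strictMonoOn_Iic_of_lt_succ fun t ht => by
    simpa using LS.node_mono i hi t (Nat.le_of_lt_succ ht)

lemma node_mem_Icc (hi : i ∈ Icc 1 (k - 1)) {t : ℕ} (ht : t ≤ k / 2 + 1) :
    LS.node i t ∈ Icc 1 (nn k) := by
  have hmono := (LS.node_strictMonoOn hi).monotoneOn
  have h₁ := hmono (Set.mem_Iic.2 (Nat.zero_le _)) (Set.mem_Iic.2 ht) (Nat.zero_le t)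
  have h₂ := hmono (Set.mem_Iic.2 ht) (Set.mem_Iic.2 le_rfl) ht
  rw [LS.node_first i hi] at h₁
  rw [LS.node_last i hi] at h₂
  exact mem_Icc.2 ⟨h₁, h₂⟩

lemma node_mem_interior (hi : i ∈ Icc 1 (k - 1)) {t : ℕ} (ht : t ∈ Icc 1 (k / 2)) :
    LS.node i t ∈ Icc 2 (nn k - 1) := by
  have ht' := mem_Icc.1 ht
  have hmono := LS.node_strictMonoOn hi
  have h₁ := hmono (Set.mem_Iic.2 (Nat.zero_le _)) (Set.mem_Iic.2 (by omega)) (by omega : 0 < t)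
  have h₂ := hmono (Set.mem_Iic.2 (by omega)) (Set.mem_Iic.2 le_rfl) (by omega : t < k / 2 + 1)
  rw [LS.node_first i hi] at h₁
  rw [LS.node_last i hi] at h₂
  exact mem_Icc.2 ⟨h₁, by omega⟩

lemma eq_of_node_eq_node {i' t t' : ℕ} (hi : i ∈ Icc 1 (k - 1)) (hi' : i' ∈ Icc 1 (k - 1))
    (ht : t ∈ Icc 1 (k / 2)) (ht' : t' ≤ k / 2 + 1) (h : LS.node i t = LS.node i' t') : i = i' := by
  have hint := LS.node_mem_interior hi ht
  have ht'' : t' ∈ Icc 1 (k / 2) := by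
    refine mem_Icc.2 ⟨Nat.one_le_iff_ne_zero.2 fun h0 => ?_, Nat.le_of_lt_succ <|
      lt_of_le_of_ne ht' fun hL => ?_⟩
    · rw [h, h0, LS.node_first i' hi'] at hint; simp at hint
    · rw [h, hL, LS.node_last i' hi'] at hint; simp at hint; omega
  obtain ⟨w, -, huniq⟩ := LS.cover _ hint
  exact (huniq i ⟨hi, t, ht, rfl⟩).trans (huniq i' ⟨hi', t', ht'', h.symm⟩).symm

lemma P_eq_image (hi : i ∈ Icc 1 (k - 1)) :
    LS.P i = (Icc 0 (k / 2)).image fun t => s(LS.node i t, LS.node i (t + 1)) :=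
  if_neg (by have := mem_Icc.1 hi; omega)

lemma exists_interior_mem_of_mem_P (hk : 2 ≤ k) (hi : i ∈ Icc 1 (k - 1)) {e : Sym2 ℕ}
    (he : e ∈ LS.P i) : ∃ t ∈ Icc 1 (k / 2), LS.node i t ∈ e := by
  rw [LS.P_eq_image hi, mem_image] at he
  obtain ⟨t, ht, rfl⟩ := he
  have ht' := mem_Icc.1 ht
  rcases Nat.eq_zero_or_pos t with rfl | htpos
  · exact ⟨1, mem_Icc.2 ⟨le_rfl, by omega⟩, Sym2.mem_mk_right _ _⟩
  · exact ⟨t, mem_Icc.2 ⟨htpos, ht'.2⟩, Sym2.mem_mk_left _ _⟩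

lemma eq_of_mem_P_of_mem_P (hk : 2 ≤ k) {i' : ℕ} (hi : i ∈ Icc 1 (k - 1))
    (hi' : i' ∈ Icc 1 (k - 1)) {e : Sym2 ℕ} (he : e ∈ LS.P i) (he' : e ∈ LS.P i') : i = i' := by
  obtain ⟨t, ht, hte⟩ := LS.exists_interior_mem_of_mem_P hk hi he
  rw [LS.P_eq_image hi', mem_image] at he'
  obtain ⟨t', ht', rfl⟩ := he'
  have ht'' := mem_Icc.1 ht'
  rcases Sym2.mem_iff.1 hte with h | h
  · exact LS.eq_of_node_eq_node hi hi' ht (by omega) h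
  · exact LS.eq_of_node_eq_node hi hi' ht (by omega) h

lemma mk_one_nn_notMem_P (hk : 2 ≤ k) (hi : i ∈ Icc 1 (k - 1)) : s(1, nn k) ∉ LS.P i := by
  intro he
  obtain ⟨t, ht, hte⟩ := LS.exists_interior_mem_of_mem_P hk hi he
  have := mem_Icc.1 (LS.node_mem_interior hi ht)
  rcases Sym2.mem_iff.1 hte with h | h <;> omega

lemma pairwiseDisjoint_P (hk : 2 ≤ k) : (Icc 1 k : Set ℕ).PairwiseDisjoint LS.P := by
  intro i hi i' hi' hne
  rw [Function.onFun, disjoint_left]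
  intro e he he'
  have hPk : LS.P k = {s(1, nn k)} := if_pos rfl
  simp only [coe_Icc, Set.mem_Icc] at hi hi'
  by_cases hik : i = k
  · subst hik
    rw [hPk, mem_singleton] at he
    exact LS.mk_one_nn_notMem_P hk (mem_Icc.2 ⟨hi'.1, by omega⟩) (he ▸ he')
  by_cases hik' : i' = k
  · subst hik'
    rw [hPk, mem_singleton] at he'
    exact LS.mk_one_nn_notMem_P hk (mem_Icc.2 ⟨hi.1, by omega⟩) (he' ▸ he)
  exact hne (LS.eq_of_mem_P_of_mem_P hk (mem_Icc.2 ⟨hi.1, by omega⟩)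
    (mem_Icc.2 ⟨hi'.1, by omega⟩) he he')

def pathCrossings (S : Finset ℕ) (i : ℕ) : ℕ := crossings (LS.node i · ∈ S) (k / 2 + 1)

section

open scoped Classical

lemma card_deltaL_P (hi : i ∈ Icc 1 (k - 1)) (S : Finset ℕ) :
    #(deltaL (LS.P i) S) = LS.pathCrossings S i := by
  have hinj : Set.InjOn (fun t => s(LS.node i t, LS.node i (t + 1))) (Icc 0 (k / 2) : Set ℕ) := by
    intro t ht t' ht' h
    have hmono := LS.node_strictMonoOn hi
    simp only [coe_Icc, Set.mem_Icc] at ht ht'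
    rcases Sym2.eq_iff.1 h with ⟨h, -⟩ | ⟨h₁, h₂⟩
    · exact hmono.injOn (Set.mem_Iic.2 (by omega)) (Set.mem_Iic.2 (by omega)) h
    · have := hmono.injOn (Set.mem_Iic.2 (by omega)) (Set.mem_Iic.2 (by omega)) h₁
      have := hmono.injOn (Set.mem_Iic.2 (by omega)) (Set.mem_Iic.2 (by omega)) h₂
      omega
  rw [deltaL, P_eq_image LS hi, filter_image,
    card_image_of_injOn (hinj.mono (coe_subset.2 (filter_subset _ _))), pathCrossings, crossings,
    Nat.range_succ_eq_Icc_zero]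
  exact congrArg card (filter_congr fun t _ => exists_mk_eq_mem_notMem_iff S _ _)

lemma card_deltaL_P_self (S : Finset ℕ) :
    #(deltaL (LS.P k) S) = if 1 ∈ S ↔ nn k ∈ S then 0 else 1 := by
  rw [deltaL, P, if_pos rfl, filter_singleton]
  simp only [exists_mk_eq_mem_notMem_iff]
  split_ifs <;> simp_all

theorem card_deltaL (hk : 2 ≤ k) (S : Finset ℕ) :
    #(deltaL LS.links S) = ∑ i ∈ Icc 1 (k - 1), LS.pathCrossings S i +
      if 1 ∈ S ↔ nn k ∈ S then 0 else 1 := by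
  have hIcc : Icc 1 k = insert k (Icc 1 (k - 1)) := by ext; simp; omega
  rw [deltaL, links, filter_biUnion, card_biUnion fun i hi i' hi' hne =>
      disjoint_filter_filter (LS.pairwiseDisjoint_P hk hi hi' hne),
    hIcc, sum_insert (by simp; omega), add_comm]
  congr 1
  · exact sum_congr rfl fun i hi => LS.card_deltaL_P hi S
  · exact LS.card_deltaL_P_self S

end

lemma pathCrossings_Nset (hi : i ∈ Icc 1 (k - 1)) {v : ℕ} (hv : v ∈ Icc 1 (nn k - 1)) :
    LS.pathCrossings (Nset v) i = 1 := by
  have hv' := mem_Icc.1 hv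
  have h0 : LS.node i 0 ∈ Nset v := by rw [LS.node_first i hi]; exact mem_Icc.2 ⟨le_rfl, hv'.1⟩
  have hL : LS.node i (k / 2 + 1) ∉ Nset v := by
    rw [LS.node_last i hi, Nset, mem_Icc]; omega
  have := crossings_add_ite_add_ite (mem_of_monotoneOn (S := Nset v)
    (by rw [Nset, coe_Icc]; exact Set.ordConnected_Icc) (LS.node_strictMonoOn hi).monotoneOn)
  rw [if_pos h0, if_neg hL, if_pos ⟨0, Nat.zero_le _, h0⟩] at this
  exact Nat.add_right_cancel this

lemma pathCrossings_Qset (hke : Even k) (hi : i ∈ Icc 1 (k - 1)) {j : ℕ}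
    (hj : j ∈ Icc 1 (k - 1)) :
    LS.pathCrossings (Qset k j) i =
      if (i ≤ j ∧ j ≤ min (i + k / 2 - 1) (k - 1)) ∨ (j < i ∧ j ≤ i - k / 2) then 2 else 0 := by
  have h0 : LS.node i 0 ∉ Qset k j := by
    rw [LS.node_first i hi]; intro h; have := mem_Icc.1 (Qset_subset hke hj h); omega
  have hL : LS.node i (k / 2 + 1) ∉ Qset k j := by
    rw [LS.node_last i hi]; intro h; have := mem_Icc.1 (Qset_subset hke hj h); omega
  have hmeets : (∃ t ≤ k / 2 + 1, LS.node i t ∈ Qset k j) ↔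
      ∃ t ∈ Icc 1 (k / 2), LS.node i t ∈ Qset k j := by
    refine ⟨fun ⟨t, ht, h⟩ => ⟨t, mem_Icc.2 ⟨?_, ?_⟩, h⟩, fun ⟨t, ht, h⟩ =>
      ⟨t, by have := mem_Icc.1 ht; omega, h⟩⟩
    · exact Nat.one_le_iff_ne_zero.2 fun h' => h0 (h' ▸ h)
    · exact Nat.le_of_lt_succ (lt_of_le_of_ne ht fun h' => hL (by rwa [h'] at h))
  have := crossings_add_ite_add_ite (mem_of_monotoneOn (S := Qset k j)
    (by rw [Qset, coe_Icc]; exact Set.ordConnected_Icc) (LS.node_strictMonoOn hi).monotoneOn)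
  rw [if_neg h0, if_neg hL] at this
  simp only [hmeets, LS.meetsQ i hi j hj] at this
  rw [pathCrossings]
  split_ifs at this ⊢ <;> omega

lemma one_le_pathCrossings (hi : i ∈ Icc 1 (k - 1)) {S : Finset ℕ} (h : ¬(1 ∈ S ↔ nn k ∈ S)) :
    1 ≤ LS.pathCrossings S i :=
  one_le_crossings (by rwa [LS.node_first i hi, LS.node_last i hi])

theorem card_deltaL_Nset (hk : 2 ≤ k) {v : ℕ} (hv : v ∈ Icc 1 (nn k - 1)) :
    #(deltaL LS.links (Nset v)) = k := by
  have hv' := mem_Icc.1 hv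
  have hsep : ¬(1 ∈ Nset v ↔ nn k ∈ Nset v) := by simp only [Nset, mem_Icc]; omega
  rw [LS.card_deltaL hk, if_neg hsep, sum_congr rfl fun i hi => LS.pathCrossings_Nset hi hv,
    sum_const, Nat.card_Icc, smul_eq_mul, mul_one]
  omega

theorem card_deltaL_Qset (hk : 2 ≤ k) (hke : Even k) {j : ℕ} (hj : j ∈ Icc 1 (k - 1)) :
    #(deltaL LS.links (Qset k j)) = k := by
  have hnot : ∀ v ∉ Icc 2 (nn k - 1), v ∉ Qset k j := fun v hv h => hv (Qset_subset hke hj h)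
  have h1 := hnot 1 (by simp)
  have hn := hnot (nn k) (by simp only [mem_Icc, nn]; omega)
  rw [LS.card_deltaL hk, if_pos (iff_of_false h1 hn), add_zero,
    sum_congr rfl fun i hi => LS.pathCrossings_Qset hke hi hj, ← sum_filter, sum_const,
    card_filter_meetsQ hke hj, smul_eq_mul, Nat.div_mul_cancel (even_iff_two_dvd.1 hke)]

lemma mem_Icc_of_mem_links {e : Sym2 ℕ} (he : e ∈ LS.links) {x : ℕ} (hx : x ∈ e) :
    x ∈ Icc 1 (nn k) := by
  obtain ⟨i, hi, he⟩ := mem_biUnion.1 he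
  by_cases hik : i = k
  · rw [hik, P, if_pos rfl, mem_singleton] at he
    subst he
    rcases Sym2.mem_iff.1 hx with rfl | rfl <;> simp only [mem_Icc, nn] <;> omega
  · have hi' : i ∈ Icc 1 (k - 1) := by have := mem_Icc.1 hi; exact mem_Icc.2 ⟨this.1, by omega⟩
    obtain ⟨t, ht, rfl⟩ := mem_image.1 ((LS.P_eq_image hi') ▸ he)
    have := mem_Icc.1 ht
    rcases Sym2.mem_iff.1 hx with rfl | rfl
    exacts [LS.node_mem_Icc hi' (by omega), LS.node_mem_Icc hi' (by omega)]

open scoped Classical in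
lemma deltaL_sdiff (S : Finset ℕ) : deltaL LS.links (Icc 1 (nn k) \ S) = deltaL LS.links S := by
  refine filter_congr fun e he => ?_
  induction e using Sym2.ind with
  | h u v =>
    simp only [exists_mk_eq_mem_notMem_iff]
    rw [mem_sdiff_iff_mem_sdiff_iff (LS.mem_Icc_of_mem_links he (Sym2.mem_mk_left u v))
      (LS.mem_Icc_of_mem_links he (Sym2.mem_mk_right u v))]

theorem k_le_card_deltaL (hk : 2 ≤ k) (hke : Even k) {S : Finset ℕ} (hne : S.Nonempty)
    (hS : S ⊆ Icc 1 (nn k)) (hSU : S ≠ Icc 1 (nn k)) (hcap : cutCap k S < 5) :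
    k ≤ #(deltaL LS.links S) := by
  by_cases hsep : 1 ∈ S ↔ nn k ∈ S
  · obtain ⟨T, hT, hTne, hTint, hTcap⟩ : ∃ T, deltaL LS.links T = deltaL LS.links S ∧
        T.Nonempty ∧ T ⊆ Icc 2 (nn k - 1) ∧ cutCap k T ≤ 4 := by
      by_cases h1 : 1 ∈ S
      · exact ⟨Icc 1 (nn k) \ S, LS.deltaL_sdiff S,
          sdiff_nonempty.2 fun h => hSU (subset_antisymm hS h),
          subset_Icc_two_of_notMem sdiff_subset (fun h => (mem_sdiff.1 h).2 h1)
            (fun h => (mem_sdiff.1 h).2 (hsep.1 h1)),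
          by rw [cutCap_sdiff hke]; omega⟩
      · exact ⟨S, rfl, hne, subset_Icc_two_of_notMem hS h1 (fun h => h1 (hsep.2 h)), by omega⟩
    obtain ⟨j, hj, rfl⟩ := exists_eq_Qset_of_cutCap_le_four hk hke hTne hTint hTcap
    rw [← hT, LS.card_deltaL_Qset hk hke hj]
  · rw [LS.card_deltaL hk, if_neg hsep]
    have := sum_le_sum fun i hi => LS.one_le_pathCrossings (S := S) (i := i) hi hsep
    rw [sum_const, Nat.card_Icc, smul_eq_mul, mul_one] at this
    omega

end LinksSystem

/-- for every links system `L`, the vector `x*` with `x*_ℓ = 1/k` for every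
link `ℓ` satisfies `Σ_{ℓ ∈ δ_L(S)} x*_ℓ ≥ 1` for every nonempty proper `S ⊆ {1, …, n}`
whose cut capacity in `G` is less than `5`, with equality whenever `S` is one of the sets
`N_1, …, N_{n-1}, Q_1, …, Q_{k-1}`. -/
theorem statement7 (k : ℕ) (hk : 4 ≤ k) (hke : Even k) (LS : LinksSystem k) :
    (∀ S : Finset ℕ, S.Nonempty → S ⊆ Finset.Icc 1 (nn k) → S ≠ Finset.Icc 1 (nn k) →
        cutCap k S < 5 → 1 ≤ ∑ _e ∈ deltaL LS.links S, (1 / k : ℝ)) ∧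
    (∀ i ∈ Finset.Icc 1 (nn k - 1), ∑ _e ∈ deltaL LS.links (Nset i), (1 / k : ℝ) = 1) ∧
    (∀ j ∈ Finset.Icc 1 (k - 1), ∑ _e ∈ deltaL LS.links (Qset k j), (1 / k : ℝ) = 1) := by
  have hk2 : 2 ≤ k := by omega
  have hk0 : (0 : ℝ) < k := by exact_mod_cast (show 0 < k by omega)
  have hsum : ∀ F : Finset (Sym2 ℕ), ∑ _e ∈ F, (1 / k : ℝ) = #F / k := fun F => by
    rw [sum_const, nsmul_eq_mul, mul_one_div]
  refine ⟨fun S hne hS hSU hcap => ?_, fun i hi => ?_, fun j hj => ?_⟩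
  · rw [hsum, le_div_iff₀ hk0, one_mul]
    exact_mod_cast LS.k_le_card_deltaL hk2 hke hne hS hSU hcap
  · rw [hsum, LS.card_deltaL_Nset hk2 hi, div_self hk0.ne']
  · rw [hsum, LS.card_deltaL_Qset hk2 hke hj, div_self hk0.ne']

end CoverSmallCuts
end
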